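/- Every subgroup of A₅ of the form P ⋊ ℤ/m with P a p-group for some prime p and p ∤ m is isomorphic to one of: the trivial group, ℤ/2, ℤ/3, ℤ/5, ℤ/2 × ℤ/2, the dihedral group D₃ of order 6, the dihedral group D₅ of order 10, or A₄. -/

import Mathlib

/-!
Every element of `A₅` has order `1`, `2`, `3` or `5`, and `|A₅| = 60`. In `P ⋊ ℤ/m` this forces
`m ∈ {1, 2, 3, 5}` and `|P| ∈ {1, p, 4}`. When both factors are nontrivial, the generator of `ℤ/m`
cannot act trivially on `P`, since otherwise it would commute with an element of `P` of coprime
order and produce an element of order `6`, `10` or `15`. Its order `m` therefore divides `|Aut P|`,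
which is `p - 1` if `|P| = p` and divides `4!` if `|P| = 4`. What survives is `ℤ/2` acting by
inversion on `ℤ/3` or `ℤ/5` (the dihedral groups `D₃`, `D₅`) and `ℤ/3` acting on the Klein
four-group by an automorphism of order `3` (which gives `A₄`).
-/

open Multiplicative SemidirectProduct

def HasA5ElementOrders (G : Type*) [Group G] : Prop :=
  ∀ g : G, orderOf g ∈ ({1, 2, 3, 5} : Finset ℕ)

theorem HasA5ElementOrders.of_injective {G K : Type*} [Group G] [Group K] {f : G →* K}
    (hf : Function.Injective f) (hK : HasA5ElementOrders K) : HasA5ElementOrders G :=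
  fun g => orderOf_injective f hf g ▸ hK (f g)

set_option maxRecDepth 10000 in
theorem alternatingGroup_fin_five_pow_eq_one (g : alternatingGroup (Fin 5)) :
    g ^ 2 = 1 ∨ g ^ 3 = 1 ∨ g ^ 5 = 1 := by
  revert g
  decide

theorem hasA5ElementOrders_alternatingGroup_fin_five :
    HasA5ElementOrders (alternatingGroup (Fin 5)) := by
  intro g
  have h (p : ℕ) (hp : p.Prime) (hg : g ^ p = 1) : orderOf g = 1 ∨ orderOf g = p :=
    (Nat.dvd_prime hp).mp (orderOf_dvd_of_pow_eq_one hg)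
  rcases alternatingGroup_fin_five_pow_eq_one g with hg | hg | hg
  · rcases h 2 Nat.prime_two hg with h | h <;> simp [h]
  · rcases h 3 Nat.prime_three hg with h | h <;> simp [h]
  · rcases h 5 Nat.prime_five hg with h | h <;> simp [h]

theorem nat_card_alternatingGroup_fin_five : Nat.card (alternatingGroup (Fin 5)) = 60 := by
  rw [nat_card_alternatingGroup, Nat.card_fin]
  rfl

theorem Nat.Prime.pow_dvd_sixty {p n : ℕ} (hp : p.Prime) (h : p ^ n ∣ 60) :
    n = 0 ∨ n = 1 ∨ p = 2 ∧ n = 2 := by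
  obtain _ | _ | n := n
  · exact .inl rfl
  · exact .inr (.inl rfl)
  have hp2 : p ^ 2 ∣ 60 := (pow_dvd_pow p (by omega)).trans h
  have hp7 : p ≤ 7 := by nlinarith [Nat.le_of_dvd (by norm_num) hp2]
  obtain rfl : p = 2 := by
    interval_cases p <;> revert hp hp2 <;> decide
  obtain _ | n := n
  · exact .inr (.inr ⟨rfl, rfl⟩)
  · exact absurd ((pow_dvd_pow 2 (by omega : 3 ≤ n + 1 + 2)).trans h) (by norm_num)

theorem orderOf_ofAdd_one (m : ℕ) : orderOf (ofAdd (1 : ZMod m)) = m := by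
  rw [orderOf_ofAdd_eq_addOrderOf, ZMod.addOrderOf_one]

theorem ofAdd_one_pow_val {n : ℕ} [NeZero n] (x : Multiplicative (ZMod n)) :
    ofAdd (1 : ZMod n) ^ (toAdd x).val = x := by
  rw [← ofAdd_nsmul, nsmul_one, ZMod.natCast_zmod_val]
  rfl

@[simps]
def monoidHomOfPowEqOne (n : ℕ) [NeZero n] {G : Type*} [Group G] (c : G) (hc : c ^ n = 1) :
    Multiplicative (ZMod n) →* G where
  toFun x := c ^ (toAdd x).val
  map_one' := by simp
  map_mul' x y := by rw [toAdd_mul, ZMod.val_add, ← pow_eq_pow_mod _ hc, pow_add]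

theorem monoidHomOfPowEqOne_ofAdd_one (n : ℕ) [NeZero n] {G : Type*} [Group G] (c : G)
    (hc : c ^ n = 1) : monoidHomOfPowEqOne n c hc (ofAdd 1) = c := by
  rw [monoidHomOfPowEqOne_apply, toAdd_ofAdd, ZMod.val_one_eq_one_mod, ← pow_eq_pow_mod _ hc,
    pow_one]

theorem natCard_mulAut_dvd_factorial {N : Type*} [Group N] [Finite N] :
    Nat.card (MulAut N) ∣ (Nat.card N).factorial := by
  rw [← Nat.card_perm]
  exact Subgroup.card_dvd_of_injective (MulAut.toPerm N) fun _ _ h =>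
    MulEquiv.ext (Equiv.ext_iff.mp h)

theorem IsKleinFour.of_card_eq_four_of_orderOf_ne_four {G : Type*} [Group G]
    (hG : Nat.card G = 4) (h4 : ∀ g : G, orderOf g ≠ 4) : IsKleinFour G := by
  have : Finite G := Nat.finite_of_card_ne_zero (by rw [hG]; norm_num)
  have : Nontrivial G := Finite.one_lt_card_iff_nontrivial.mp (by rw [hG]; norm_num)
  refine ⟨hG, (Monoid.exponent_eq_prime_iff Nat.prime_two).mpr fun g hg => ?_⟩
  have hdvd : orderOf g ∣ 4 := hG ▸ orderOf_dvd_natCard g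
  have key : ∀ a ∈ Nat.divisors 4, a ≠ 1 → a ≠ 4 → a = 2 := by decide
  exact key _ (Nat.mem_divisors.mpr ⟨hdvd, by norm_num⟩) (orderOf_eq_one_iff.not.mpr hg) (h4 g)

namespace SemidirectProduct

variable {N G : Type*} [Group N] [Group G] {φ : G →* MulAut N}

theorem commute_inl_inr {g : G} (hg : φ g = 1) (n : N) :
    Commute (inl n : N ⋊[φ] G) (inr g) := by
  ext <;> simp [hg]

theorem orderOf_inl (n : N) : orderOf (inl n : N ⋊[φ] G) = orderOf n :=
  orderOf_injective _ inl_injective n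

theorem orderOf_inr (g : G) : orderOf (inr g : N ⋊[φ] G) = orderOf g :=
  orderOf_injective _ inr_injective g

theorem orderOf_inl_mul_inr {g : G} (hg : φ g = 1) (n : N)
    (hco : (orderOf n).Coprime (orderOf g)) :
    orderOf (inl n * inr g : N ⋊[φ] G) = orderOf n * orderOf g := by
  rw [(commute_inl_inr hg n).orderOf_mul_eq_mul_orderOf_of_coprime
    (by rwa [orderOf_inl, orderOf_inr]), orderOf_inl, orderOf_inr]

noncomputable def mulEquivRightOfSubsingleton [Subsingleton N] : N ⋊[φ] G ≃* G :=
  MulEquiv.ofBijective rightHom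
    ⟨fun _ _ h => SemidirectProduct.ext (Subsingleton.elim _ _) h, rightHom_surjective⟩

noncomputable def mulEquivLeftOfSubsingleton [Subsingleton G] : N ⋊[φ] G ≃* N :=
  (MulEquiv.ofBijective inl
    ⟨inl_injective, fun x => ⟨x.left, SemidirectProduct.ext rfl (Subsingleton.elim _ _)⟩⟩).symm

theorem map_ne_one_of_coprime (hS : HasA5ElementOrders (N ⋊[φ] G)) {n : N} {g : G}
    (hn : orderOf n ≠ 1) (hg : orderOf g ≠ 1) (hco : (orderOf n).Coprime (orderOf g)) :
    φ g ≠ 1 := by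
  intro hφ
  have key : ∀ a ∈ ({1, 2, 3, 5} : Finset ℕ), ∀ b ∈ ({1, 2, 3, 5} : Finset ℕ),
      a ≠ 1 → b ≠ 1 → a.Coprime b → a * b ∉ ({1, 2, 3, 5} : Finset ℕ) := by decide
  refine key _ ?_ _ ?_ hn hg hco ?_
  · simpa only [orderOf_inl] using hS (inl n)
  · simpa only [orderOf_inr] using hS (inr g)
  · rw [← orderOf_inl_mul_inr hφ n hco]
    exact hS _

variable {m : ℕ} {φ : Multiplicative (ZMod m) →* MulAut N}

theorem mem_of_hasA5ElementOrders (hS : HasA5ElementOrders (N ⋊[φ] Multiplicative (ZMod m))) :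
    m ∈ ({1, 2, 3, 5} : Finset ℕ) := by
  simpa only [orderOf_inr, orderOf_ofAdd_one] using hS (inr (ofAdd 1))

theorem orderOf_map_ofAdd_one (hS : HasA5ElementOrders (N ⋊[φ] Multiplicative (ZMod m)))
    (hm : m ≠ 1) {n : N} (hn : orderOf n ≠ 1) (hco : (orderOf n).Coprime m) :
    orderOf (φ (ofAdd 1)) = m := by
  have hm_prime : m.Prime := by
    have key : ∀ a ∈ ({1, 2, 3, 5} : Finset ℕ), a ≠ 1 → a.Prime := by decide
    exact key m (mem_of_hasA5ElementOrders hS) hm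
  have := Fact.mk hm_prime
  refine orderOf_eq_prime ?_ (map_ne_one_of_coprime hS hn ?_ ?_)
  · have h := pow_orderOf_eq_one (ofAdd (1 : ZMod m))
    rw [orderOf_ofAdd_one] at h
    rw [← map_pow, h, map_one]
  · rwa [orderOf_ofAdd_one]
  · rwa [orderOf_ofAdd_one]

end SemidirectProduct

@[simps]
def DihedralGroup.rHom (n : ℕ) : Multiplicative (ZMod n) →* DihedralGroup n where
  toFun x := r (toAdd x)
  map_one' := rfl
  map_mul' _ _ := (r_mul_r _ _).symm

section Dihedral

variable {q : ℕ}

theorem MulAut.apply_ofAdd_zmod [NeZero q] (σ : MulAut (Multiplicative (ZMod q))) (j : ZMod q) :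
    σ (ofAdd j) = ofAdd (j * toAdd (σ (ofAdd 1))) := by
  conv_lhs => rw [← ofAdd_one_pow_val (ofAdd j), map_pow, ← ofAdd_toAdd (σ (ofAdd 1)),
    ← ofAdd_nsmul, nsmul_eq_mul, toAdd_ofAdd, ZMod.natCast_zmod_val]

theorem MulAut.apply_eq_inv_of_sq_eq_one [Fact q.Prime] {σ : MulAut (Multiplicative (ZMod q))}
    (h2 : σ ^ 2 = 1) (h1 : σ ≠ 1) (x : Multiplicative (ZMod q)) : σ x = x⁻¹ := by
  have hk : toAdd (σ (ofAdd 1)) * toAdd (σ (ofAdd 1)) = 1 := by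
    have h := DFunLike.congr_fun h2 (ofAdd 1)
    rw [sq, MulAut.mul_apply, MulAut.one_apply, ← ofAdd_toAdd (σ (ofAdd 1)),
      apply_ofAdd_zmod] at h
    exact congrArg toAdd h
  rcases mul_self_eq_one_iff.mp hk with hk | hk
  · refine absurd (MulEquiv.ext fun y => ?_) h1
    rw [← ofAdd_toAdd y, apply_ofAdd_zmod, hk, mul_one]
    rfl
  · rw [← ofAdd_toAdd x, apply_ofAdd_zmod, hk, mul_neg_one]
    rfl

open DihedralGroup in
theorem SemidirectProduct.nonempty_mulEquiv_dihedralGroup_of_apply_eq_inv [NeZero q]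
    (φ : Multiplicative (ZMod 2) →* MulAut (Multiplicative (ZMod q)))
    (hφ : ∀ x, φ (ofAdd 1) x = x⁻¹) :
    Nonempty (Multiplicative (ZMod q) ⋊[φ] Multiplicative (ZMod 2) ≃* DihedralGroup q) := by
  let srHom := monoidHomOfPowEqOne 2 (sr (0 : ZMod q)) (by rw [sq, sr_mul_self])
  have hsr : srHom (ofAdd 1) = sr 0 := monoidHomOfPowEqOne_ofAdd_one ..
  have hcompat (z) : (rHom q).comp (φ z).toMonoidHom =
      (MulAut.conj (srHom z)).toMonoidHom.comp (rHom q) := by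
    ext x
    obtain rfl | rfl : z = 1 ∨ z = ofAdd 1 := by revert z; decide
    · simp
    · simp [hφ, hsr, sr_mul_r, sr_mul_sr]
  have hsurj : Function.Surjective (lift (rHom q) srHom hcompat) := by
    rintro (i | i)
    · exact ⟨inl (ofAdd i), by simp⟩
    · exact ⟨inl (ofAdd (-i)) * inr (ofAdd 1), by simp [hsr, r_mul_sr]⟩
  have : Finite (Multiplicative (ZMod q) ⋊[φ] Multiplicative (ZMod 2)) :=
    Finite.of_equiv _ equivProd.symm
  refine ⟨MulEquiv.ofBijective _ (hsurj.bijective_of_nat_card_le ?_)⟩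
  rw [DihedralGroup.nat_card, SemidirectProduct.card, Nat.card_congr toAdd, Nat.card_congr toAdd,
    Nat.card_zmod, Nat.card_zmod, mul_comm]

theorem SemidirectProduct.nonempty_mulEquiv_dihedralGroup [Fact q.Prime] {N : Type*} [Group N]
    (hN : Nat.card N = q) {φ : Multiplicative (ZMod 2) →* MulAut N} (hφ : φ (ofAdd 1) ≠ 1) :
    Nonempty (N ⋊[φ] Multiplicative (ZMod 2) ≃* DihedralGroup q) := by
  let e : N ≃* Multiplicative (ZMod q) :=
    mulEquivOfPrimeCardEq hN (by rw [Nat.card_congr toAdd, Nat.card_zmod])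
  let ψ := (MulAut.congr e).toMonoidHom.comp φ
  have hψ1 : ψ (ofAdd 1) ≠ 1 := (map_ne_one_iff _ (MulAut.congr e).injective).mpr hφ
  have hψ2 : ψ (ofAdd 1) ^ 2 = 1 := by
    rw [← map_pow, show ofAdd (1 : ZMod 2) ^ 2 = 1 from rfl, map_one]
  obtain ⟨D⟩ := nonempty_mulEquiv_dihedralGroup_of_apply_eq_inv ψ
    (MulAut.apply_eq_inv_of_sq_eq_one hψ2 hψ1)
  exact ⟨(congr e (.refl _) fun _ => MulEquiv.ext fun _ => by simp [ψ]).trans D⟩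

end Dihedral

section KleinFour

local notation "V₄" => Multiplicative (ZMod 2 × ZMod 2)

def kleinFourRotation : MulAut V₄ where
  toFun v := ofAdd ((toAdd v).2, (toAdd v).1 + (toAdd v).2)
  invFun v := ofAdd ((toAdd v).1 + (toAdd v).2, (toAdd v).1)
  left_inv := by decide
  right_inv := by decide
  map_mul' := by decide

theorem mulAut_kleinFour_eq_rotation_of_pow_three {σ : MulAut V₄} (h3 : σ ^ 3 = 1)
    (h1 : σ ≠ 1) : σ = kleinFourRotation ∨ σ = kleinFourRotation⁻¹ := by
  have hσ (v : V₄) :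
      σ v = σ (ofAdd (1, 0)) ^ (toAdd v).1.val * σ (ofAdd (0, 1)) ^ (toAdd v).2.val := by
    have hv : ∀ v : V₄, v = ofAdd (1, 0) ^ (toAdd v).1.val * ofAdd (0, 1) ^ (toAdd v).2.val := by
      decide
    conv_lhs => rw [hv v, map_mul, map_pow, map_pow]
  -- `σ` is determined by the images `a`, `b` of the two basis vectors: check all 16 pairs.
  have key : ∀ a b : V₄, let f := fun v : V₄ => a ^ (toAdd v).1.val * b ^ (toAdd v).2.val
      (∀ v, f (f (f v)) = v) →
        (∀ v, f v = v) ∨ (∀ v, f v = kleinFourRotation v) ∨ ∀ v, f v = kleinFourRotation⁻¹ v := by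
    decide
  have hcube (v : V₄) : σ (σ (σ v)) = v := by
    simpa [pow_succ] using DFunLike.congr_fun h3 v
  have key_σ := key (σ (ofAdd (1, 0))) (σ (ofAdd (0, 1)))
  simp only [← hσ] at key_σ
  rcases key_σ hcube with h | h | h
  · exact absurd (MulEquiv.ext h) h1
  · exact .inl (MulEquiv.ext h)
  · exact .inr (MulEquiv.ext h)

def kleinFourToAlternatingGroup : V₄ →* alternatingGroup (Fin 4) :=
  let x : alternatingGroup (Fin 4) :=
    ⟨Equiv.swap 0 1 * Equiv.swap 2 3, Equiv.Perm.mem_alternatingGroup.mpr (by decide)⟩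
  let y : alternatingGroup (Fin 4) :=
    ⟨Equiv.swap 0 2 * Equiv.swap 1 3, Equiv.Perm.mem_alternatingGroup.mpr (by decide)⟩
  MonoidHom.mk' (fun v => x ^ (toAdd v).1.val * y ^ (toAdd v).2.val) (by decide)

def alternatingGroupThreeCycle : alternatingGroup (Fin 4) :=
  ⟨Equiv.swap 0 2 * Equiv.swap 2 1, Equiv.Perm.mem_alternatingGroup.mpr (by decide)⟩

theorem SemidirectProduct.nonempty_mulEquiv_alternatingGroup_of_apply_eq_rotation
    (φ : Multiplicative (ZMod 3) →* MulAut V₄) (hφ : φ (ofAdd 1) = kleinFourRotation) :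
    Nonempty (V₄ ⋊[φ] Multiplicative (ZMod 3) ≃* alternatingGroup (Fin 4)) := by
  let tHom := monoidHomOfPowEqOne 3 alternatingGroupThreeCycle (by decide)
  have hφ_pow (z) : φ z = kleinFourRotation ^ (toAdd z).val := by
    rw [← hφ, ← map_pow, ofAdd_one_pow_val]
  have hcompat (z) : kleinFourToAlternatingGroup.comp (φ z).toMonoidHom =
      (MulAut.conj (tHom z)).toMonoidHom.comp kleinFourToAlternatingGroup := by
    refine MonoidHom.ext fun v => ?_
    have key : ∀ (z : Multiplicative (ZMod 3)) (v : V₄),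
        kleinFourToAlternatingGroup ((kleinFourRotation ^ (toAdd z).val) v) =
          tHom z * kleinFourToAlternatingGroup v * (tHom z)⁻¹ := by
      decide
    simpa [hφ_pow] using key z v
  have hsurj : Function.Surjective (lift kleinFourToAlternatingGroup tHom hcompat) := by
    have key : ∀ y, ∃ (v : V₄) (z : Multiplicative (ZMod 3)),
        kleinFourToAlternatingGroup v * tHom z = y := by
      decide
    intro y
    obtain ⟨v, z, h⟩ := key y
    exact ⟨inl v * inr z, by simpa using h⟩
  have : Finite (V₄ ⋊[φ] Multiplicative (ZMod 3)) := Finite.of_equiv _ equivProd.symm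
  refine ⟨MulEquiv.ofBijective _ (hsurj.bijective_of_nat_card_le ?_)⟩
  rw [SemidirectProduct.card, nat_card_alternatingGroup, Nat.card_eq_fintype_card,
    Nat.card_eq_fintype_card, Nat.card_eq_fintype_card]
  rfl

theorem SemidirectProduct.nonempty_mulEquiv_alternatingGroup_four {N : Type*} [Group N]
    [IsKleinFour N] {φ : Multiplicative (ZMod 3) →* MulAut N} (hφ : φ (ofAdd 1) ≠ 1) :
    Nonempty (N ⋊[φ] Multiplicative (ZMod 3) ≃* alternatingGroup (Fin 4)) := by
  obtain ⟨e⟩ : Nonempty (N ≃* V₄) := IsKleinFour.nonempty_mulEquiv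
  let ψ := (MulAut.congr e).toMonoidHom.comp φ
  let E : N ⋊[φ] _ ≃* V₄ ⋊[ψ] _ := congr e (.refl _) fun _ => MulEquiv.ext fun _ => by simp [ψ]
  have hψ1 : ψ (ofAdd 1) ≠ 1 := (map_ne_one_iff _ (MulAut.congr e).injective).mpr hφ
  have hψ3 : ψ (ofAdd 1) ^ 3 = 1 := by
    rw [← map_pow, show ofAdd (1 : ZMod 3) ^ 3 = 1 from rfl, map_one]
  rcases mulAut_kleinFour_eq_rotation_of_pow_three hψ3 hψ1 with h | h
  · obtain ⟨A⟩ := nonempty_mulEquiv_alternatingGroup_of_apply_eq_rotation ψ h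
    exact ⟨E.trans A⟩
  · -- Precomposing with inversion on `ℤ/3` turns the action by `kleinFourRotation⁻¹` into the
    -- action by `kleinFourRotation`.
    let ψ' := ψ.comp (MulEquiv.inv (Multiplicative (ZMod 3))).toMonoidHom
    have h' : ψ' (ofAdd 1) = kleinFourRotation := by simp [ψ', h]
    obtain ⟨A⟩ := nonempty_mulEquiv_alternatingGroup_of_apply_eq_rotation ψ' h'
    let E' : V₄ ⋊[ψ] _ ≃* V₄ ⋊[ψ'] _ :=
      congr (.refl _) (MulEquiv.inv _) fun _ => MulEquiv.ext fun _ => by simp [ψ']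
    exact ⟨(E.trans E').trans A⟩

end KleinFour

def IsCyclicByPTypeInA5 (K : Type*) [Group K] : Prop :=
  Nonempty (K ≃* Multiplicative (ZMod 1)) ∨
    Nonempty (K ≃* Multiplicative (ZMod 2)) ∨
    Nonempty (K ≃* Multiplicative (ZMod 3)) ∨
    Nonempty (K ≃* Multiplicative (ZMod 5)) ∨
    Nonempty (K ≃* Multiplicative (ZMod 2 × ZMod 2)) ∨
    Nonempty (K ≃* DihedralGroup 3) ∨
    Nonempty (K ≃* DihedralGroup 5) ∨
    Nonempty (K ≃* alternatingGroup (Fin 4))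

theorem IsCyclicByPTypeInA5.of_mulEquiv {K L : Type*} [Group K] [Group L] (e : K ≃* L)
    (h : IsCyclicByPTypeInA5 L) : IsCyclicByPTypeInA5 K := by
  have t {X : Type} [Group X] : Nonempty (L ≃* X) → Nonempty (K ≃* X) := fun ⟨f⟩ => ⟨e.trans f⟩
  exact h.imp t <| .imp t <| .imp t <| .imp t <| .imp t <| .imp t <| .imp t t

namespace SemidirectProduct

variable {N : Type*} [Group N] {m : ℕ} {φ : Multiplicative (ZMod m) →* MulAut N}

theorem isCyclicByPTypeInA5_of_subsingleton [Subsingleton N]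
    (hS : HasA5ElementOrders (N ⋊[φ] Multiplicative (ZMod m))) :
    IsCyclicByPTypeInA5 (N ⋊[φ] Multiplicative (ZMod m)) := by
  have e := mulEquivRightOfSubsingleton (φ := φ)
  have hm := mem_of_hasA5ElementOrders hS
  simp only [Finset.mem_insert, Finset.mem_singleton] at hm
  rcases hm with rfl | rfl | rfl | rfl
  · exact .inl ⟨e⟩
  · exact .inr <| .inl ⟨e⟩
  · exact .inr <| .inr <| .inl ⟨e⟩
  · exact .inr <| .inr <| .inr <| .inl ⟨e⟩

theorem isCyclicByPTypeInA5_of_card_prime {q : ℕ} [hq : Fact q.Prime] (hN : Nat.card N = q)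
    (hqm : ¬ q ∣ m) (hS : HasA5ElementOrders (N ⋊[φ] Multiplicative (ZMod m))) :
    IsCyclicByPTypeInA5 (N ⋊[φ] Multiplicative (ZMod m)) := by
  have : Finite N := Nat.finite_of_card_ne_zero (hN ▸ hq.out.ne_zero)
  have : IsCyclic N := isCyclic_of_prime_card hN
  obtain ⟨n, hn⟩ := exists_prime_orderOf_dvd_card' q (by rw [hN])
  have hqS : q ∈ ({1, 2, 3, 5} : Finset ℕ) := by simpa only [orderOf_inl, hn] using hS (inl n)
  by_cases hm : m = 1
  · subst hm
    have e : N ⋊[φ] _ ≃* Multiplicative (ZMod q) := mulEquivLeftOfSubsingleton.trans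
      (mulEquivOfPrimeCardEq hN (by rw [Nat.card_congr toAdd, Nat.card_zmod]))
    simp only [Finset.mem_insert, Finset.mem_singleton] at hqS
    rcases hqS with rfl | rfl | rfl | rfl
    · exact absurd hq.out Nat.not_prime_one
    · exact .inr <| .inl ⟨e⟩
    · exact .inr <| .inr <| .inl ⟨e⟩
    · exact .inr <| .inr <| .inr <| .inl ⟨e⟩
  have hord := orderOf_map_ofAdd_one hS hm (n := n) (hn ▸ hq.out.ne_one)
    (hn ▸ (hq.out.coprime_iff_not_dvd).mpr hqm)
  have hdvd : m ∣ q - 1 := by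
    rw [← hord, ← Nat.totient_prime hq.out, ← hN, ← IsCyclic.card_mulAut]
    exact orderOf_dvd_natCard _
  have key : ∀ q ∈ ({1, 2, 3, 5} : Finset ℕ), ∀ m ∈ ({1, 2, 3, 5} : Finset ℕ),
      m ≠ 1 → ¬ q ∣ m → m ∣ q - 1 → m = 2 ∧ (q = 3 ∨ q = 5) := by decide
  obtain ⟨rfl, rfl | rfl⟩ := key q hqS m (mem_of_hasA5ElementOrders hS) hm hqm hdvd
  · exact .inr <| .inr <| .inr <| .inr <| .inr <| .inl <|
      nonempty_mulEquiv_dihedralGroup hN (by simp [← orderOf_eq_one_iff, hord])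
  · exact .inr <| .inr <| .inr <| .inr <| .inr <| .inr <| .inl <|
      nonempty_mulEquiv_dihedralGroup hN (by simp [← orderOf_eq_one_iff, hord])

theorem isCyclicByPTypeInA5_of_card_eq_four (hN : Nat.card N = 4) (hm2 : ¬ 2 ∣ m)
    (hS : HasA5ElementOrders (N ⋊[φ] Multiplicative (ZMod m))) :
    IsCyclicByPTypeInA5 (N ⋊[φ] Multiplicative (ZMod m)) := by
  have : IsKleinFour N := .of_card_eq_four_of_orderOf_ne_four hN fun n h4 => by
    simpa [orderOf_inl, h4] using hS (inl n)
  have : Finite N := Nat.finite_of_card_ne_zero (by rw [hN]; norm_num)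
  by_cases hm : m = 1
  · subst hm
    exact .inr <| .inr <| .inr <| .inr <| .inl <|
      ⟨mulEquivLeftOfSubsingleton.trans IsKleinFour.nonempty_mulEquiv.some⟩
  obtain ⟨n, hn⟩ := exists_prime_orderOf_dvd_card' 2 (by rw [hN]; norm_num : 2 ∣ Nat.card N)
  have hord := orderOf_map_ofAdd_one hS hm (n := n) (by rw [hn]; norm_num)
    (hn ▸ (Nat.prime_two.coprime_iff_not_dvd).mpr hm2)
  have hdvd : m ∣ 24 := by
    rw [← hord, show 24 = (Nat.card N).factorial by rw [hN]; rfl]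
    exact (orderOf_dvd_natCard _).trans natCard_mulAut_dvd_factorial
  have key : ∀ m ∈ ({1, 2, 3, 5} : Finset ℕ), m ≠ 1 → ¬ 2 ∣ m → m ∣ 24 → m = 3 := by decide
  obtain rfl := key m (mem_of_hasA5ElementOrders hS) hm hm2 hdvd
  exact .inr <| .inr <| .inr <| .inr <| .inr <| .inr <| .inr <|
    nonempty_mulEquiv_alternatingGroup_four (by simp [← orderOf_eq_one_iff, hord])

theorem isCyclicByPTypeInA5_of_isPGroup {p : ℕ} (hp : p.Prime) (hpm : ¬ p ∣ m)
    (hN : IsPGroup p N)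
    (hS : HasA5ElementOrders (N ⋊[φ] Multiplicative (ZMod m)))
    (hcard : Nat.card (N ⋊[φ] Multiplicative (ZMod m)) ∣ 60) :
    IsCyclicByPTypeInA5 (N ⋊[φ] Multiplicative (ZMod m)) := by
  have := Fact.mk hp
  rw [SemidirectProduct.card] at hcard
  have hN60 : Nat.card N ∣ 60 := dvd_of_mul_right_dvd hcard
  have : Finite N := Nat.finite_of_card_ne_zero (ne_zero_of_dvd_ne_zero (by norm_num) hN60)
  obtain ⟨k, hk⟩ := hN.exists_card_eq
  rcases hp.pow_dvd_sixty (hk ▸ hN60) with rfl | rfl | ⟨rfl, rfl⟩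
  · have : Subsingleton N := (Nat.card_eq_one_iff_unique.mp (by rw [hk, pow_zero])).1
    exact isCyclicByPTypeInA5_of_subsingleton hS
  · exact isCyclicByPTypeInA5_of_card_prime (hk.trans (pow_one p)) hpm hS
  · exact isCyclicByPTypeInA5_of_card_eq_four hk hpm hS

end SemidirectProduct

/-- Every subgroup of `A₅` of the form `P ⋊ ℤ/m` with `P` a `p`-group for some prime `p`
and `p ∤ m` is isomorphic to one of: the trivial group, `ℤ/2`, `ℤ/3`, `ℤ/5`,
`ℤ/2 × ℤ/2`, the dihedral group `D₃` of order 6, the dihedral group `D₅` of order 10,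
or `A₄`. -/
theorem cyclic_by_p_subgroups_of_A5 (H : Subgroup (alternatingGroup (Fin 5)))
    (hH : ∃ (p m : ℕ), p.Prime ∧ ¬ p ∣ m ∧
      ∃ (P : Type) (_ : Group P) (_ : IsPGroup p P)
        (φ : Multiplicative (ZMod m) →* MulAut P),
        Nonempty (H ≃* (P ⋊[φ] Multiplicative (ZMod m)))) :
    Nonempty (H ≃* Multiplicative (ZMod 1)) ∨
    Nonempty (H ≃* Multiplicative (ZMod 2)) ∨
    Nonempty (H ≃* Multiplicative (ZMod 3)) ∨
    Nonempty (H ≃* Multiplicative (ZMod 5)) ∨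
    Nonempty (H ≃* Multiplicative (ZMod 2 × ZMod 2)) ∨
    Nonempty (H ≃* DihedralGroup 3) ∨
    Nonempty (H ≃* DihedralGroup 5) ∨
    Nonempty (H ≃* alternatingGroup (Fin 4)) := by
  obtain ⟨p, m, hp, hpm, P, _, hP, φ, ⟨e⟩⟩ := hH
  have hS : HasA5ElementOrders (P ⋊[φ] Multiplicative (ZMod m)) :=
    hasA5ElementOrders_alternatingGroup_fin_five.of_injective
      (f := H.subtype.comp e.symm.toMonoidHom) (H.subtype_injective.comp e.symm.injective)
  have hcard : Nat.card (P ⋊[φ] Multiplicative (ZMod m)) ∣ 60 := by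
    rw [← Nat.card_congr e.toEquiv, ← nat_card_alternatingGroup_fin_five]
    exact H.card_subgroup_dvd_card
  exact IsCyclicByPTypeInA5.of_mulEquiv e (isCyclicByPTypeInA5_of_isPGroup hp hpm hP hS hcard)
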